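/- arXiv:1802.03359 — 2 statements merged into one kernel-verified Lean document; each statement's English description precedes it below -/
import Mathlib

section
/- Let ℓ = p^h be a prime power and K a field containing F_{ℓ^6}. Suppose (x₁,y₁), (x₂,y₂) ∈ K² both satisfy y^(ℓ+1) = x^ℓ + x, and let r be the line through them parametrized by λ ↦ ((x₁+λx₂)/(1+λ), (y₁+λy₂)/(1+λ)). If x₁ + x₂^ℓ - y₁y₂^ℓ ≠ 0 or x₁^ℓ + x₂ - y₁^ℓ y₂ ≠ 0, then the set of λ ∈ K ∖ {-1} for which the parametrized point satisfies y^(ℓ+1) = x^ℓ + x has at most ℓ + 1 elements. -/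
open Polynomial

theorem stmt_15 (p h ℓ : ℕ) (hp : p.Prime) (hh : 0 < h) (hℓ : ℓ = p ^ h)
    (K : Type*) [Field K] [CharP K p]
    (x₁ y₁ x₂ y₂ : K)
    (hP₁ : y₁ ^ (ℓ + 1) = x₁ ^ ℓ + x₁)
    (hP₂ : y₂ ^ (ℓ + 1) = x₂ ^ ℓ + x₂)
    (hne : x₁ + x₂ ^ ℓ - y₁ * y₂ ^ ℓ ≠ 0 ∨ x₁ ^ ℓ + x₂ - y₁ ^ ℓ * y₂ ≠ 0) :
    let S : Set K := {t | t ≠ -1 ∧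
      ((y₁ + t * y₂) / (1 + t)) ^ (ℓ + 1) =
        ((x₁ + t * x₂) / (1 + t)) ^ ℓ + (x₁ + t * x₂) / (1 + t)}
    S.Finite ∧ S.ncard ≤ ℓ + 1 := by
  intro S
  classical
  have hfp : Fact p.Prime := ⟨hp⟩
  have frob : ∀ a b : K, (a + b) ^ ℓ = a ^ ℓ + b ^ ℓ := by
    subst hℓ
    exact fun a b => add_pow_char_pow a b p h
  have hℓ2 : 2 ≤ ℓ := by
    subst hℓ
    calc 2 ≤ p := hp.two_le
    _ ≤ p ^ h := Nat.le_self_pow (by omega) p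
  set A := x₁ + x₂ ^ ℓ - y₁ * y₂ ^ ℓ with hA
  set B := x₁ ^ ℓ + x₂ - y₁ ^ ℓ * y₂ with hB
  set P : K[X] := C A * X ^ ℓ + C B * X with hPdef
  have hcoeffℓ : P.coeff ℓ = A := by
    simp [hPdef, coeff_X, coeff_X_pow, show (1:ℕ) ≠ ℓ by omega]
  have hcoeff1 : P.coeff 1 = B := by
    simp [hPdef, coeff_X, coeff_X_pow, show ℓ ≠ 1 by omega, show (1:ℕ) ≠ ℓ by omega]
  have hPne : P ≠ 0 := by
    intro h0
    rcases hne with hA0 | hB0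
    · exact hA0 (by rw [← hcoeffℓ, h0, coeff_zero])
    · exact hB0 (by rw [← hcoeff1, h0, coeff_zero])
  have hsub : S ⊆ ↑P.roots.toFinset := by
    rintro t ⟨ht1, ht⟩
    have hu : (1 : K) + t ≠ 0 := by
      intro h0
      exact ht1 (by linear_combination h0)
    have H : (y₁ + t * y₂) ^ (ℓ + 1) =
        (x₁ + t * x₂) ^ ℓ * (1 + t) + (x₁ + t * x₂) * (1 + t) ^ ℓ := by
      have h2 := ht
      rw [div_pow, div_pow, div_add_div _ _ (pow_ne_zero _ hu) hu,
        div_eq_div_iff (pow_ne_zero _ hu) (mul_ne_zero (pow_ne_zero _ hu) hu)] at h2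
      have hkey : (y₁ + t * y₂) ^ (ℓ + 1) * ((1 + t) ^ ℓ * (1 + t)) =
          ((x₁ + t * x₂) ^ ℓ * (1 + t) + (x₁ + t * x₂) * (1 + t) ^ ℓ) *
            ((1 + t) ^ ℓ * (1 + t)) := by
        rw [pow_succ] at h2 ⊢
        linear_combination h2
      exact mul_right_cancel₀ (mul_ne_zero (pow_ne_zero _ hu) hu) hkey
    have heval : P.eval t = 0 := by
      simp only [hPdef, eval_add, eval_mul, eval_C, eval_pow, eval_X]
      rw [pow_succ] at H hP₁ hP₂
      simp only [frob, mul_pow, one_pow] at H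
      rw [hA, hB]
      linear_combination -H + hP₁ + t ^ ℓ * t * hP₂
    rw [Finset.mem_coe, Multiset.mem_toFinset, mem_roots hPne]
    exact heval
  have hfin : S.Finite := Set.Finite.subset P.roots.toFinset.finite_toSet hsub
  have hcard : S.ncard ≤ ℓ + 1 := by
    calc S.ncard ≤ (↑P.roots.toFinset : Set K).ncard :=
          Set.ncard_le_ncard hsub P.roots.toFinset.finite_toSet
      _ = P.roots.toFinset.card := Set.ncard_coe_finset _
      _ ≤ Multiset.card P.roots := P.roots.toFinset_card_le
      _ ≤ P.natDegree := P.card_roots'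
      _ ≤ ℓ := by
          apply natDegree_add_le_of_degree_le
          · exact (natDegree_C_mul_le _ _).trans (by simp)
          · exact (natDegree_C_mul_le _ _).trans (by simp [hℓ2]; omega)
      _ ≤ ℓ + 1 := Nat.le_succ _
  exact ⟨hfin, hcard⟩
end

section
/- Let ℓ be a prime power and K = F_{ℓ^6}. For any a, b, c, d, e, f ∈ K not all zero (defining a conic C: aX² + bY² + cXY + dX + eY + f = 0) such that the conic does not contain the Hermitian-type curve H: Y^(ℓ+1) = X^ℓ + X as a component, the number of common solutions (x,y) ∈ K² of the two equations is at most 2(ℓ+1). -/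
/-!
Fix the conic `b Y² + v(X) Y + u(X) = 0` (`deg v ≤ 1`, `deg u ≤ 2`) and the curve
`Y^(q+1) = H(X)` with `deg H = q ≥ 2`; here `H = X^ℓ + X`. Eliminating `Y` produces a nonzero
`W ∈ K[X]` of degree at most `2(q+1)` whose multiplicity at each `x` bounds the number of common
points above `x`, so there are at most `deg W` of them. When `b ≠ 0`, reduce `Y^(q+1)` modulo the
monic conic to `A(X) Y + B(X)`, and let `W` be the norm of `A Y + B - H`. Above a root of `A`
(where the fibre may have two points) `W` vanishes to order two. And `W ≠ 0`: otherwise `H` or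
`H²` would be a `(q+1)`-th power in `K(X)`, impossible as `q+1` divides neither `q` nor `2q`.
-/

section Counting

open Polynomial

variable {K : Type*} [Field K]

lemma encard_setOf_isRoot_le {g : K[X]} (hg : g ≠ 0) :
    {y | g.IsRoot y}.encard ≤ g.natDegree := by
  classical
  have : {y | g.IsRoot y} = (g.roots.toFinset : Set K) := by
    ext y
    simp [mem_roots hg]
  rw [this, Set.encard_coe_eq_coe_finsetCard]
  exact_mod_cast (Multiset.toFinset_card_le _).trans (card_roots' g)

lemma encard_le_rootMultiplicity_of_subset {W g : K[X]} (hW : W ≠ 0) (hg : g ≠ 0) {m : ℕ}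
    (hgm : g.natDegree ≤ m) {x : K} (hdvd : (X - C x) ^ m ∣ W) {s : Set K}
    (hs : s ⊆ {y | g.IsRoot y}) : s.encard ≤ W.rootMultiplicity x :=
  calc s.encard ≤ g.natDegree := (Set.encard_le_encard hs).trans (encard_setOf_isRoot_le hg)
    _ ≤ W.rootMultiplicity x := by
      exact_mod_cast hgm.trans ((le_rootMultiplicity_iff hW).2 hdvd)

lemma encard_le_rootMultiplicity_of_subsingleton {W : K[X]} (hW : W ≠ 0) {x : K}
    (hx : W.IsRoot x) {s : Set K} (hs : s.Subsingleton) : s.encard ≤ W.rootMultiplicity x :=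
  (Set.encard_le_one_iff_subsingleton.2 hs).trans
    (by exact_mod_cast (rootMultiplicity_pos hW).2 hx)

lemma encard_le_natDegree_of_fiber_le {W : K[X]} (hW : W ≠ 0) {Z : Set (K × K)}
    (hfib : ∀ x y, (x, y) ∈ Z → {y | (x, y) ∈ Z}.encard ≤ W.rootMultiplicity x) :
    Z.encard ≤ W.natDegree := by
  classical
  set F : K → Set K := fun x => {y | (x, y) ∈ Z}
  have hF : ∀ x, (F x).encard ≤ W.rootMultiplicity x := fun x => by
    rcases (F x).eq_empty_or_nonempty with h | ⟨y, hy⟩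
    · simp [h]
    · exact hfib x y hy
  have hZ : Z ⊆ ⋃ x ∈ W.roots.toFinset, Prod.mk x '' F x := by
    rintro ⟨x, y⟩ hxy
    have hpos : 0 < W.rootMultiplicity x := by
      have : (1 : ℕ∞) ≤ W.rootMultiplicity x :=
        (Set.one_le_encard_iff_nonempty.2 ⟨y, hxy⟩).trans (hF x)
      exact_mod_cast this
    simp only [Set.mem_iUnion, Multiset.mem_toFinset, mem_roots hW]
    exact ⟨x, (rootMultiplicity_pos hW).1 hpos, y, hxy, rfl⟩
  calc Z.encard ≤ ∑ x ∈ W.roots.toFinset, (Prod.mk x '' F x).encard :=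
        (Set.encard_le_encard hZ).trans (Finset.set_encard_biUnion_le _ _)
    _ ≤ ∑ x ∈ W.roots.toFinset, (W.rootMultiplicity x : ℕ∞) :=
        Finset.sum_le_sum fun x _ => (Set.encard_image_le _ _).trans (hF x)
    _ = Multiset.card W.roots := by
        simp_rw [← count_roots]
        exact_mod_cast Multiset.toFinset_sum_count_eq _
    _ ≤ W.natDegree := by exact_mod_cast card_roots' W

end Counting

section PowRemainder

variable {R : Type*} [CommRing R]

/-- `Y ^ n ≡ A * Y + B` modulo `Y ^ 2 + v * Y + u`, where `(A, B) = powRemainder v u n`. -/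
noncomputable def powRemainder (v u : R) : ℕ → R × R
  | 0 => (0, 1)
  | n + 1 => ((powRemainder v u n).2 - v * (powRemainder v u n).1, -u * (powRemainder v u n).1)

/-- The norm of `a * Y + b` in `R[Y] ⧸ (Y ^ 2 + v * Y + u)`. -/
def quadNorm (v u a b : R) : R := b ^ 2 - v * a * b + u * a ^ 2

lemma pow_eq_powRemainder {S : Type*} [CommRing S] (φ : R →+* S) {v u : R} {y : S}
    (hy : y ^ 2 + φ v * y + φ u = 0) (n : ℕ) :
    y ^ n = φ (powRemainder v u n).1 * y + φ (powRemainder v u n).2 := by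
  induction n with
  | zero => simp [powRemainder]
  | succ n ih =>
    simp only [powRemainder, map_sub, map_mul, map_neg]
    linear_combination y * ih + φ (powRemainder v u n).1 * hy

lemma quadNorm_powRemainder (v u : R) (n : ℕ) :
    quadNorm v u (powRemainder v u n).1 (powRemainder v u n).2 = u ^ n := by
  induction n with
  | zero => simp [quadNorm, powRemainder]
  | succ n ih =>
    simp only [quadNorm, powRemainder] at ih ⊢
    linear_combination u * ih

lemma map_quadNorm {S : Type*} [CommRing S] (φ : R →+* S) (v u a b : R) :
    φ (quadNorm v u a b) = quadNorm (φ v) (φ u) (φ a) (φ b) := by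
  simp [quadNorm]

lemma quadNorm_neg_mul (v u a y : R) :
    quadNorm v u a (-(a * y)) = a ^ 2 * (y ^ 2 + v * y + u) := by
  unfold quadNorm
  ring

lemma sq_dvd_quadNorm {v u a b d : R} (ha : d ∣ a) (hb : d ∣ b) :
    d ^ 2 ∣ quadNorm v u a b := by
  obtain ⟨a, rfl⟩ := ha
  obtain ⟨b, rfl⟩ := hb
  exact ⟨quadNorm v u a b, by unfold quadNorm; ring⟩

end PowRemainder

section Degree

open Polynomial

variable {K : Type*} [Field K]

lemma natDegree_powRemainder_le {v u : K[X]} (hv : v.natDegree ≤ 1) (hu : u.natDegree ≤ 2)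
    (n : ℕ) :
    (powRemainder v u n).1.natDegree ≤ n - 1 ∧ (powRemainder v u n).2.natDegree ≤ n := by
  induction n with
  | zero => simp [powRemainder]
  | succ n ih =>
    obtain ⟨hA, hB⟩ := ih
    rcases Nat.eq_zero_or_pos n with rfl | hn
    · simp [powRemainder]
    simp only [powRemainder, Nat.add_sub_cancel]
    refine ⟨(natDegree_sub_le _ _).trans
      (max_le hB ((natDegree_mul_le_of_le hv hA).trans (by omega))), ?_⟩
    rw [neg_mul, natDegree_neg]
    exact (natDegree_mul_le_of_le hu hA).trans (by omega)

lemma dvd_natDegree_of_pow_eq_mul_pow {p r s : K[X]} {n : ℕ} (hp : p ≠ 0) (hs : s ≠ 0)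
    (h : r ^ n = p * s ^ n) : n ∣ p.natDegree := by
  have hdeg := congrArg natDegree h
  rw [natDegree_pow, natDegree_mul hp (pow_ne_zero _ hs), natDegree_pow] at hdeg
  exact (Nat.dvd_add_left (dvd_mul_right n _)).1 (hdeg ▸ dvd_mul_right n _)

lemma pow_succ_ne_mul_pow_succ {H : K[X]} {q : ℕ} (hH : H.natDegree = q) (hq : 1 ≤ q)
    (r : K[X]) {s : K[X]} (hs : s ≠ 0) : r ^ (q + 1) ≠ H * s ^ (q + 1) := fun h => by
  have hdvd := dvd_natDegree_of_pow_eq_mul_pow (ne_zero_of_natDegree_gt (hH ▸ hq)) hs h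
  have := Nat.le_of_dvd (by omega) (hH ▸ hdvd)
  omega

lemma quadNorm_powRemainder_sub_ne_zero {v u H : K[X]} {q : ℕ} (hH : H.natDegree = q)
    (hq : 2 ≤ q) :
    quadNorm v u (powRemainder v u (q + 1)).1 ((powRemainder v u (q + 1)).2 - H) ≠ 0 := by
  set A := (powRemainder v u (q + 1)).1
  set B := (powRemainder v u (q + 1)).2
  have hH0 : H ≠ 0 := ne_zero_of_natDegree_gt (n := 0) (by omega)
  intro hW
  by_cases hA : A = 0
  -- `Y ^ (q + 1) ≡ H`, and taking norms gives `u ^ (q + 1) = H ^ 2`.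
  · have hB : B = H := by
      have : (B - H) ^ 2 = 0 := by simpa [quadNorm, hA] using hW
      exact sub_eq_zero.1 (pow_eq_zero_iff two_ne_zero |>.1 this)
    have hnorm : u ^ (q + 1) = H ^ 2 * 1 ^ (q + 1) := by
      rw [← quadNorm_powRemainder v u (q + 1)]
      simp [quadNorm, A, B, hA, hB]
    have hdvd := dvd_natDegree_of_pow_eq_mul_pow (pow_ne_zero 2 hH0) one_ne_zero hnorm
    rw [natDegree_pow, hH] at hdvd
    have : q + 1 ∣ 2 := (Nat.dvd_add_right hdvd).1 ⟨2, by ring⟩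
    have := Nat.le_of_dvd two_pos this
    omega
  -- `y = -(B - H) / A` is a root of the conic over `K(X)` with `y ^ (q + 1) = H`.
  · let ι := algebraMap K[X] (FractionRing K[X])
    have hι : Function.Injective ι := IsFractionRing.injective K[X] (FractionRing K[X])
    have hιA : ι A ≠ 0 := (map_ne_zero_iff _ hι).2 hA
    set y := -ι (B - H) / ι A
    have hBH : ι (B - H) = -(ι A * y) := by
      simp only [y]
      field_simp
    have hy : y ^ 2 + ι v * y + ι u = 0 := by
      have := congrArg ι hW
      rw [map_quadNorm, hBH, quadNorm_neg_mul, map_zero] at this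
      exact (mul_eq_zero.1 this).resolve_left (pow_ne_zero 2 hιA)
    have hpow := pow_eq_powRemainder ι hy (q + 1)
    refine pow_succ_ne_mul_pow_succ hH (by omega) (-(B - H)) hA (hι ?_)
    simp only [map_pow, map_mul, map_neg, hBH, neg_neg, mul_pow, hpow]
    rw [map_sub] at hBH
    linear_combination ι A ^ (q + 1) * hBH

end Degree

section Intersection

open Polynomial

variable {K : Type*} [Field K]

def conicPowCurveInter (b : K) (v u H : K[X]) (n : ℕ) : Set (K × K) :=
  {P | b * P.2 ^ 2 + v.eval P.1 * P.2 + u.eval P.1 = 0 ∧ P.2 ^ n = H.eval P.1}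

lemma subset_setOf_pow_eq {b : K} {v u H : K[X]} {n : ℕ} (x : K) :
    {y | (x, y) ∈ conicPowCurveInter b v u H n} ⊆ {y | (X ^ n - C (H.eval x)).IsRoot y} :=
  fun y hy => by simp [sub_eq_zero, hy.2]

lemma encard_conicPowCurveInter_zero_zero_le {u : K[X]} (hu0 : u ≠ 0) (hu : u.natDegree ≤ 2)
    (H : K[X]) {n : ℕ} (hn : 0 < n) :
    (conicPowCurveInter 0 0 u H n).encard ≤ 2 * n := by
  have hW : u ^ n ≠ 0 := pow_ne_zero n hu0
  refine (encard_le_natDegree_of_fiber_le hW fun x y hxy => ?_).trans ?_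
  · have hux : u.IsRoot x := by simpa [conicPowCurveInter] using hxy.1
    exact encard_le_rootMultiplicity_of_subset hW (X_pow_sub_C_ne_zero hn _)
      natDegree_X_pow_sub_C.le (pow_dvd_pow_of_dvd (dvd_iff_isRoot.2 hux) n)
      (subset_setOf_pow_eq x)
  · rw [natDegree_pow]
    exact_mod_cast (Nat.mul_le_mul_left n hu).trans_eq (mul_comm n 2)

lemma encard_conicPowCurveInter_zero_le {v u H : K[X]} (hv0 : v ≠ 0) (hv : v.natDegree ≤ 1)
    (hu : u.natDegree ≤ 2) {q : ℕ} (hH : H.natDegree = q) (hq : 1 ≤ q) :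
    (conicPowCurveInter 0 v u H (q + 1)).encard ≤ 2 * (q + 1) := by
  set W := H * v ^ (q + 1) - (-u) ^ (q + 1)
  have hW : W ≠ 0 := sub_ne_zero.2 (pow_succ_ne_mul_pow_succ hH hq (-u) hv0).symm
  refine (encard_le_natDegree_of_fiber_le hW fun x y hxy => ?_).trans ?_
  · have hline : ∀ y', (x, y') ∈ conicPowCurveInter 0 v u H (q + 1) →
        v.eval x * y' = -u.eval x := fun y' h' => by
      linear_combination (h'.1 : 0 * y' ^ 2 + v.eval x * y' + u.eval x = 0)
    by_cases hvx : v.IsRoot x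
    · have hux : (-u).IsRoot x := by simpa [hvx.eq_zero] using (hline y hxy).symm
      exact encard_le_rootMultiplicity_of_subset hW (X_pow_sub_C_ne_zero q.succ_pos _)
        natDegree_X_pow_sub_C.le
        (dvd_sub (dvd_mul_of_dvd_right (pow_dvd_pow_of_dvd (dvd_iff_isRoot.2 hvx) _) _)
          (pow_dvd_pow_of_dvd (dvd_iff_isRoot.2 hux) _))
        (subset_setOf_pow_eq x)
    · refine encard_le_rootMultiplicity_of_subsingleton hW ?_ fun y₁ h₁ y₂ h₂ =>
        mul_left_cancel₀ hvx ((hline y₁ h₁).trans (hline y₂ h₂).symm)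
      simp only [W, IsRoot, eval_sub, eval_mul, eval_pow, eval_neg, ← hline y hxy]
      linear_combination -(v.eval x) ^ (q + 1) * (hxy.2 : y ^ (q + 1) = H.eval x)
  · have h₁ : (H * v ^ (q + 1)).natDegree ≤ q + (q + 1) * 1 :=
      natDegree_mul_le_of_le hH.le (natDegree_pow_le_of_le _ hv)
    have h₂ : ((-u) ^ (q + 1)).natDegree ≤ (q + 1) * 2 :=
      natDegree_pow_le_of_le _ ((natDegree_neg u).trans_le hu)
    exact_mod_cast (natDegree_sub_le_of_le h₁ h₂).trans (by lia)

lemma encard_conicPowCurveInter_one_le {v u H : K[X]} (hv : v.natDegree ≤ 1)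
    (hu : u.natDegree ≤ 2) {q : ℕ} (hH : H.natDegree = q) (hq : 2 ≤ q) :
    (conicPowCurveInter 1 v u H (q + 1)).encard ≤ 2 * (q + 1) := by
  set A := (powRemainder v u (q + 1)).1
  set B := (powRemainder v u (q + 1)).2
  set W := quadNorm v u A (B - H)
  have hW : W ≠ 0 := quadNorm_powRemainder_sub_ne_zero hH hq
  have hline : ∀ x y, (x, y) ∈ conicPowCurveInter 1 v u H (q + 1) →
      (B - H).eval x = -(A.eval x * y) := by
    rintro x y ⟨h₁, h₂⟩
    have hy : y ^ 2 + evalRingHom x v * y + evalRingHom x u = 0 := by simpa using h₁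
    have := pow_eq_powRemainder (evalRingHom x) hy (q + 1)
    simp only [coe_evalRingHom] at this
    rw [eval_sub]
    linear_combination h₂ - this
  refine (encard_le_natDegree_of_fiber_le hW fun x y hxy => ?_).trans ?_
  · by_cases hAx : A.IsRoot x
    · have hBx : (B - H).IsRoot x := by simp [IsRoot, hline x y hxy, hAx.eq_zero]
      set g : K[X] := C 1 * X ^ 2 + C (v.eval x) * X + C (u.eval x)
      have hg : g.natDegree = 2 := natDegree_quadratic one_ne_zero
      refine encard_le_rootMultiplicity_of_subset hW (ne_zero_of_natDegree_gt (hg ▸ two_pos))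
        hg.le (sq_dvd_quadNorm (dvd_iff_isRoot.2 hAx) (dvd_iff_isRoot.2 hBx)) fun y' hy' => ?_
      simpa [g] using hy'.1
    · refine encard_le_rootMultiplicity_of_subsingleton hW ?_ fun y₁ h₁ y₂ h₂ =>
        mul_left_cancel₀ hAx (neg_injective ((hline x y₁ h₁).symm.trans (hline x y₂ h₂)))
      have := map_quadNorm (evalRingHom x) v u A (B - H)
      simp only [coe_evalRingHom] at this
      rw [IsRoot, this, hline x y hxy, quadNorm_neg_mul]
      simpa using Or.inr hxy.1
  · have hA : A.natDegree ≤ q := (natDegree_powRemainder_le hv hu (q + 1)).1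
    have hBH : (B - H).natDegree ≤ q + 1 :=
      (natDegree_sub_le_of_le (natDegree_powRemainder_le hv hu (q + 1)).2 hH.le).trans
        (by lia)
    have h₁ := natDegree_pow_le_of_le 2 hBH
    have h₂ := natDegree_mul_le_of_le (natDegree_mul_le_of_le hv hA) hBH
    have h₃ := natDegree_mul_le_of_le hu (natDegree_pow_le_of_le 2 hA)
    have hdeg : W.natDegree ≤ 2 * (q + 1) := (natDegree_add_le _ _).trans
      (max_le ((natDegree_sub_le_of_le h₁ h₂).trans (by lia)) (h₃.trans (by lia)))
    exact_mod_cast hdeg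

lemma conicPowCurveInter_eq_one {b : K} (hb : b ≠ 0) (v u H : K[X]) (n : ℕ) :
    conicPowCurveInter b v u H n = conicPowCurveInter 1 (C b⁻¹ * v) (C b⁻¹ * u) H n := by
  ext ⟨x, y⟩
  simp only [conicPowCurveInter, Set.mem_ofPred_eq, eval_mul, eval_C]
  refine and_congr_left fun _ => ?_
  have : b * y ^ 2 + v.eval x * y + u.eval x =
      b * (1 * y ^ 2 + b⁻¹ * v.eval x * y + b⁻¹ * u.eval x) := by
    field_simp
  rw [this, mul_eq_zero, or_iff_right hb]

lemma encard_conicPowCurveInter_le {b : K} (hb : b ≠ 0) {v u H : K[X]} (hv : v.natDegree ≤ 1)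
    (hu : u.natDegree ≤ 2) {q : ℕ} (hH : H.natDegree = q) (hq : 2 ≤ q) :
    (conicPowCurveInter b v u H (q + 1)).encard ≤ 2 * (q + 1) := by
  rw [conicPowCurveInter_eq_one hb]
  exact encard_conicPowCurveInter_one_le ((natDegree_C_mul_le _ _).trans hv)
    ((natDegree_C_mul_le _ _).trans hu) hH hq

lemma C_mul_X_add_C_ne_zero {c e : K} (h : ¬(c = 0 ∧ e = 0)) : C c * X + C e ≠ 0 := fun h0 =>
  h ⟨by simpa using congrArg (coeff · 1) h0, by simpa using congrArg (coeff · 0) h0⟩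

lemma C_mul_X_sq_add_C_mul_X_add_C_ne_zero {a d f : K} (h : ¬(a = 0 ∧ d = 0 ∧ f = 0)) :
    C a * X ^ 2 + C d * X + C f ≠ 0 := fun h0 =>
  h ⟨by simpa using congrArg (coeff · 2) h0, by simpa using congrArg (coeff · 1) h0,
    by simpa using congrArg (coeff · 0) h0⟩

lemma natDegree_X_pow_add_X {q : ℕ} (hq : 2 ≤ q) : (X ^ q + X : K[X]).natDegree = q := by
  rw [natDegree_add_eq_left_of_natDegree_lt] <;> simp only [natDegree_X_pow, natDegree_X]
  omega

lemma setOf_conic_eq_conicPowCurveInter (a b c d e f : K) (q : ℕ) :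
    {P : K × K | a * P.1 ^ 2 + b * P.2 ^ 2 + c * P.1 * P.2 + d * P.1 + e * P.2 + f = 0 ∧
      P.2 ^ (q + 1) = P.1 ^ q + P.1} =
    conicPowCurveInter b (C c * X + C e) (C a * X ^ 2 + C d * X + C f) (X ^ q + X) (q + 1) := by
  ext ⟨x, y⟩
  simp only [conicPowCurveInter, Set.mem_ofPred_eq, eval_add, eval_mul, eval_pow, eval_C, eval_X]
  refine and_congr_left fun _ => ?_
  ring_nf

end Intersection

open MvPolynomial in
theorem stmt_16_general (ℓ : ℕ) (hℓ : IsPrimePow ℓ)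
    (K : Type*) [Field K]
    (a b c d e f : K)
    (hne : ¬(a = 0 ∧ b = 0 ∧ c = 0 ∧ d = 0 ∧ e = 0 ∧ f = 0)) :
    Set.ncard {P : K × K |
      a * P.1 ^ 2 + b * P.2 ^ 2 + c * P.1 * P.2 + d * P.1 + e * P.2 + f = 0 ∧
      P.2 ^ (ℓ + 1) = P.1 ^ ℓ + P.1} ≤ 2 * (ℓ + 1) := by
  open Polynomial in
  have hℓ2 : 2 ≤ ℓ := hℓ.two_le
  have hH := natDegree_X_pow_add_X (K := K) hℓ2
  rw [setOf_conic_eq_conicPowCurveInter]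
  refine ENat.natCast_le_natCast.1 ((Set.ncard_le_encard _).trans ?_)
  rcases eq_or_ne b 0 with rfl | hb
  · by_cases hce : c = 0 ∧ e = 0
    · obtain ⟨rfl, rfl⟩ := hce
      simp only [map_zero, zero_mul, add_zero]
      exact_mod_cast encard_conicPowCurveInter_zero_zero_le
        (C_mul_X_sq_add_C_mul_X_add_C_ne_zero (by tauto)) natDegree_quadratic_le _ ℓ.succ_pos
    · exact_mod_cast encard_conicPowCurveInter_zero_le (C_mul_X_add_C_ne_zero hce)
        natDegree_linear_le natDegree_quadratic_le hH (by omega)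
  · exact_mod_cast encard_conicPowCurveInter_le hb natDegree_linear_le natDegree_quadratic_le
      hH hℓ2

open MvPolynomial in
theorem stmt_16 (ℓ : ℕ) (hℓ : IsPrimePow ℓ)
    (K : Type*) [Field K] [Fintype K] (hK : Fintype.card K = ℓ ^ 6)
    (a b c d e f : K)
    (hne : ¬(a = 0 ∧ b = 0 ∧ c = 0 ∧ d = 0 ∧ e = 0 ∧ f = 0))
    (hnotdvd : ¬((X 1 ^ (ℓ + 1) - X 0 ^ ℓ - X 0 : MvPolynomial (Fin 2) K) ∣
      (C a * X 0 ^ 2 + C b * X 1 ^ 2 + C c * X 0 * X 1 + C d * X 0 + C e * X 1 + C f))) :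
    Set.ncard {P : K × K |
      a * P.1 ^ 2 + b * P.2 ^ 2 + c * P.1 * P.2 + d * P.1 + e * P.2 + f = 0 ∧
      P.2 ^ (ℓ + 1) = P.1 ^ ℓ + P.1} ≤ 2 * (ℓ + 1) :=
  stmt_16_general ℓ hℓ K a b c d e f hne
end
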